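/- arXiv:2105.03707 — 8 statements merged into one kernel-verified Lean document; each statement's English description precedes it below -/
import Mathlib

section
/- Assume the storage-related KKT conditions hold and u > 0. Then for every hour h, the rent on the energy capacity constraint equals the positive part of the forward difference of the storage-balance dual: τ_h = (Ω_{h+1} − Ω_h)^+. -/
/-!
STATEMENT 1: Under the storage-related KKT conditions of the core capacity
planning LP (hours indexed cyclically by `Fin n`), if the storage energy
capacity `u` is strictly positive, then for every hour `h` the rent on the
energy capacity constraint equals the positive part of the forward
difference of the storage-balance dual: `τ h = (Ω (h+1) - Ω h)⁺`.
-/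

theorem storage_rent_eq_posPart_of_dual_diff
    {n : ℕ} [NeZero n]
    (u cu : ℝ) (s τ Ω β : Fin n → ℝ)
    -- (i) stationarity in s_h
    (hstat : ∀ h : Fin n, Ω h - Ω (h + 1) + τ h = β h)
    -- (ii) nonnegativity and complementary slackness for β (duals of s_h ≥ 0)
    (hβ_nonneg : ∀ h, 0 ≤ β h)
    (hβ_cs : ∀ h, β h * s h = 0)
    -- (iii) nonnegativity and complementary slackness for τ (duals of s_h ≤ u)
    (hτ_nonneg : ∀ h, 0 ≤ τ h)
    (hτ_cs : ∀ h, τ h * (u - s h) = 0)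
    -- (iv) primal feasibility 0 ≤ s_h ≤ u
    (hs_nonneg : ∀ h, 0 ≤ s h)
    (hs_le : ∀ h, s h ≤ u)
    -- u > 0
    (hu : 0 < u) :
    ∀ h : Fin n, τ h = max (Ω (h + 1) - Ω h) 0 := by
  intro h
  rcases lt_or_eq_of_le (hτ_nonneg h) with hpos | heq
  · -- τ h > 0 : then s h = u, so β h = 0
    have hsu : u - s h = 0 := by
      rcases mul_eq_zero.mp (hτ_cs h) with h1 | h2
      · exact absurd h1.symm (ne_of_lt hpos)
      · exact h2
    have hsh : s h = u := by linarith
    have hβ0 : β h = 0 := by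
      rcases mul_eq_zero.mp (hβ_cs h) with h1 | h2
      · exact h1
      · rw [hsh] at h2; linarith
    have := hstat h
    rw [hβ0] at this
    have hτeq : τ h = Ω (h + 1) - Ω h := by linarith
    rw [hτeq, max_eq_left]
    linarith
  · -- τ h = 0
    have hβ := hβ_nonneg h
    have := hstat h
    rw [← heq] at *
    have : Ω (h + 1) - Ω h ≤ 0 := by linarith
    rw [max_eq_right this]
end

section
/- Assume the storage-related KKT conditions hold, u > 0, and additionally c^u = Σ_{h=0}^{n−1} τ_h (stationarity in u at u > 0). Then the marginal value of storage energy capacity equals the sum of the positive differences of the storage-balance dual variable: c^u = Σ_{h=0}^{n−1} (Ω_{h+1} − Ω_h)^+. -/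
/-!
STATEMENT 2: Under the storage-related KKT conditions of the core capacity
planning LP (hours indexed cyclically by `Fin n`), with `u > 0` and the
stationarity condition in `u` (`c^u = Σ_h τ_h`), the marginal value of
storage energy capacity equals the sum of the positive differences of the
storage-balance dual variable: `c^u = Σ_h (Ω (h+1) - Ω h)⁺`.
-/

theorem storage_marginal_value_eq_sum_posPart_dual_diff
    {n : ℕ} [NeZero n]
    (u cu : ℝ) (s τ Ω β : Fin n → ℝ)
    -- (i) stationarity in s_h
    (hstat : ∀ h : Fin n, Ω h - Ω (h + 1) + τ h = β h)
    -- (ii) nonnegativity and complementary slackness for β (duals of s_h ≥ 0)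
    (hβ_nonneg : ∀ h, 0 ≤ β h)
    (hβ_cs : ∀ h, β h * s h = 0)
    -- (iii) nonnegativity and complementary slackness for τ (duals of s_h ≤ u)
    (hτ_nonneg : ∀ h, 0 ≤ τ h)
    (hτ_cs : ∀ h, τ h * (u - s h) = 0)
    -- (iv) primal feasibility 0 ≤ s_h ≤ u
    (hs_nonneg : ∀ h, 0 ≤ s h)
    (hs_le : ∀ h, s h ≤ u)
    -- u > 0
    (hu : 0 < u)
    -- stationarity in u at u > 0
    (hcu : cu = ∑ h : Fin n, τ h) :
    cu = ∑ h : Fin n, max (Ω (h + 1) - Ω h) 0 := by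
  rw [hcu]
  refine Finset.sum_congr rfl fun h _ => ?_
  have hdiff : Ω (h + 1) - Ω h = τ h - β h := by linarith [hstat h]
  rw [hdiff]
  rcases eq_or_lt_of_le (hτ_nonneg h) with hτ0 | hτpos
  · rw [← hτ0]
    simpa using hβ_nonneg h
  · -- τ h > 0 ⇒ s h = u > 0 ⇒ β h = 0
    have hsu : s h = u := by
      by_contra hne
      have : u - s h ≠ 0 := fun heq => hne (by linarith)
      exact this (by
        have := hτ_cs h
        rcases mul_eq_zero.1 this with h1 | h2
        · exact absurd h1 (ne_of_gt hτpos)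
        · exact h2)
    have hβ0 : β h = 0 := by
      have := hβ_cs h
      rcases mul_eq_zero.1 this with h1 | h2
      · exact h1
      · exact absurd h2 (by rw [hsu]; exact ne_of_gt hu)
    rw [hβ0]
    simpa using hτ_nonneg h
end

section
/- Assume the storage-related KKT conditions hold and u > 0. Then for every hour h: if Ω_{h+1} < Ω_h then s_h = 0, and if s_h = 0 then Ω_{h+1} ≤ Ω_h. Consequently the storage-balance dual Ω forms a monotonically nondecreasing sequence along any run of consecutive hours at which the stored energy is strictly positive, and it can strictly decrease only at hours where the stored energy is zero. -/
/-!
At an hour with positive stored energy, complementary slackness kills the dual `β h` of `s h ≥ 0`,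
so stationarity reads `Ω (h + 1) - Ω h = τ h ≥ 0`. At an hour with empty storage, `s h < u`
kills the dual `τ h` of `s h ≤ u` instead, and stationarity reads `Ω h - Ω (h + 1) = β h ≥ 0`.
Chaining the first inequality along a run of positive hours gives the monotonicity.
-/

theorem le_of_stationarity_of_pos {a b τ β s : ℝ} (hstat : a - b + τ = β) (hτ : 0 ≤ τ)
    (hcs : β * s = 0) (hs : 0 < s) : a ≤ b := by
  have hβ : β = 0 := (mul_eq_zero.mp hcs).resolve_right hs.ne'
  linarith

theorem le_of_stationarity_of_eq_zero {a b τ β s u : ℝ} (hstat : a - b + τ = β) (hβ : 0 ≤ β)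
    (hcs : τ * (u - s) = 0) (hu : 0 < u) (hs : s = 0) : b ≤ a := by
  have hτ : τ = 0 := (mul_eq_zero.mp hcs).resolve_right (by rw [hs, sub_zero]; exact hu.ne')
  linarith

theorem apply_le_apply_add_natCast_of_run {α β : Type*} [AddMonoidWithOne α] [Preorder β]
    {f : α → β} {p : α → Prop} (hstep : ∀ a, p a → f a ≤ f (a + 1)) (a : α) :
    ∀ j : ℕ, (∀ k < j, p (a + k)) → f a ≤ f (a + j)
  | 0, _ => by simp
  | j + 1, hrun => by
    rw [Nat.cast_succ, ← add_assoc]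
    exact (apply_le_apply_add_natCast_of_run hstep a j fun k hk => hrun k (by omega)).trans
      (hstep _ (hrun j j.lt_succ_self))

open Fin.NatCast in
theorem storage_dual_monotone_on_positive_runs_general
    {n : ℕ} [NeZero n]
    (u : ℝ) (s τ Ω β : Fin n → ℝ)
    -- (i) stationarity in s_h
    (hstat : ∀ h : Fin n, Ω h - Ω (h + 1) + τ h = β h)
    -- (ii) nonnegativity and complementary slackness for β (duals of s_h ≥ 0)
    (hβ_nonneg : ∀ h, 0 ≤ β h)
    (hβ_cs : ∀ h, β h * s h = 0)
    -- (iii) nonnegativity and complementary slackness for τ (duals of s_h ≤ u)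
    (hτ_nonneg : ∀ h, 0 ≤ τ h)
    (hτ_cs : ∀ h, τ h * (u - s h) = 0)
    -- (iv) primal feasibility 0 ≤ s_h ≤ u
    (hs_nonneg : ∀ h, 0 ≤ s h)
    -- u > 0
    (hu : 0 < u) :
    (∀ h : Fin n, Ω (h + 1) < Ω h → s h = 0) ∧
    (∀ h : Fin n, s h = 0 → Ω (h + 1) ≤ Ω h) ∧
    -- Ω is nondecreasing along any run of consecutive hours with s > 0:
    (∀ h : Fin n, ∀ j : ℕ, (∀ k : ℕ, k < j → 0 < s (h + (k : Fin n))) →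
      Ω h ≤ Ω (h + (j : Fin n))) := by
  have hstep (h : Fin n) (hpos : 0 < s h) : Ω h ≤ Ω (h + 1) :=
    le_of_stationarity_of_pos (hstat h) (hτ_nonneg h) (hβ_cs h) hpos
  refine ⟨fun h hlt => ?_, fun h hs0 => ?_, apply_le_apply_add_natCast_of_run hstep⟩
  · by_contra hne
    exact (hstep h ((hs_nonneg h).lt_of_ne' hne)).not_gt hlt
  · exact le_of_stationarity_of_eq_zero (hstat h) (hβ_nonneg h) (hτ_cs h) hu hs0

open Fin.NatCast in
theorem storage_dual_monotone_on_positive_runs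
    {n : ℕ} [NeZero n]
    (u cu : ℝ) (s τ Ω β : Fin n → ℝ)
    -- (i) stationarity in s_h
    (hstat : ∀ h : Fin n, Ω h - Ω (h + 1) + τ h = β h)
    -- (ii) nonnegativity and complementary slackness for β (duals of s_h ≥ 0)
    (hβ_nonneg : ∀ h, 0 ≤ β h)
    (hβ_cs : ∀ h, β h * s h = 0)
    -- (iii) nonnegativity and complementary slackness for τ (duals of s_h ≤ u)
    (hτ_nonneg : ∀ h, 0 ≤ τ h)
    (hτ_cs : ∀ h, τ h * (u - s h) = 0)
    -- (iv) primal feasibility 0 ≤ s_h ≤ u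
    (hs_nonneg : ∀ h, 0 ≤ s h)
    (hs_le : ∀ h, s h ≤ u)
    -- u > 0
    (hu : 0 < u) :
    (∀ h : Fin n, Ω (h + 1) < Ω h → s h = 0) ∧
    (∀ h : Fin n, s h = 0 → Ω (h + 1) ≤ Ω h) ∧
    -- Ω is nondecreasing along any run of consecutive hours with s > 0:
    (∀ h : Fin n, ∀ j : ℕ, (∀ k : ℕ, k < j → 0 < s (h + (k : Fin n))) →
      Ω h ≤ Ω (h + (j : Fin n))) :=
  storage_dual_monotone_on_positive_runs_general u s τ Ω β hstat hβ_nonneg hβ_cs hτ_nonneg hτ_cs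
    hs_nonneg hu
end

section
/- Assume the storage-related KKT conditions hold, u > 0, c^u = Σ_{h=0}^{n−1} τ_h, and the set Z = {h : s_h = 0} of hours with zero stored energy is nonempty. Enumerate Z cyclically as z_1, z_2, …, z_K, and define the k-th charge/discharge cycle to be the cyclic interval of hours z_k + 1, z_k + 2, …, z_{k+1} (indices mod n, with z_{K+1} = z_1). Then Ω is nondecreasing along each cycle, and the marginal value of storage energy capacity decomposes over cycles as c^u = Σ_{k=1}^{K} (max_{h ∈ cycle k} Ω_h − min_{h ∈ cycle k} Ω_h) = Σ_{k=1}^{K} (Ω_{z_{k+1}} − Ω_{z_k + 1}), i.e., the value of each cycle collapses to the difference of the two boundary values of Ω. -/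
open Fin.NatCast

/-- Cyclic length of the `k`-th charge/discharge cycle: the number of hours
from `z k` (exclusive) forward to `z (k+1)` (inclusive), a value in
`{1,…,n}` (equal to `n` when there is a single zero-hour). -/
def cycLen (n K : ℕ) (z : Fin (K + 1) → Fin n) (k : Fin (K + 1)) : ℕ :=
  ((z (k + 1)).val + n - (z k).val - 1) % n + 1

/-- The `k`-th charge/discharge cycle: the cyclic interval of hours
`z k + 1, …, z (k+1)`. -/
def cycle (n K : ℕ) [NeZero n] (z : Fin (K + 1) → Fin n) (k : Fin (K + 1)) :
    Finset (Fin n) :=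
  (Finset.Icc 1 (cycLen n K z k)).image fun i : ℕ => z k + (i : Fin n)

theorem cycle_nonempty (n K : ℕ) [NeZero n] (z : Fin (K + 1) → Fin n)
    (k : Fin (K + 1)) : (cycle n K z k).Nonempty := by
  unfold cycle cycLen
  exact Finset.Nonempty.image (Finset.nonempty_Icc.mpr (Nat.le_add_left 1 _)) _

/-!
Between two consecutive zero-storage hours the storage level is positive, so the dual `β`
vanishes there and stationarity reads `Ω (h + 1) = Ω h + τ h ≥ Ω h`: `Ω` climbs along each cycle,
and its maximum and minimum over the cycle are its last and first values. Summing stationarity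
over the cyclic horizon telescopes to `Σ τ = Σ β`, and `β` lives on the zero hours `z k`, where
`τ` vanishes because `s = 0 < u`; hence `Σ τ = Σ_k (Ω (z k) - Ω (z k + 1))`, which after shifting
`k` is the sum over cycles of `Ω (z (k + 1)) - Ω (z k + 1)`.
-/

theorem Nat.mod_eq_self_or_sub_of_lt_two_mul {a n : ℕ} (h : a < 2 * n) :
    a < n ∧ a % n = a ∨ n ≤ a ∧ a % n = a - n := by
  rcases lt_or_ge a n with ha | ha
  · exact Or.inl ⟨ha, Nat.mod_eq_of_lt ha⟩
  · exact Or.inr ⟨ha, by rw [Nat.mod_eq_sub_mod ha, Nat.mod_eq_of_lt (by omega)]⟩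

theorem Fintype.sum_sub_comp_add_eq_zero {G M : Type*} [AddGroup G] [Fintype G]
    [AddCommGroup M] (f : G → M) (g : G) : ∑ x, (f x - f (x + g)) = 0 := by
  rw [Finset.sum_sub_distrib,
    Fintype.sum_equiv (Equiv.addRight g) (fun x => f (x + g)) f fun _ => rfl, sub_self]

theorem Finset.sup'_eq_of_monotoneOn_of_isGreatest {ι α : Type*} [Preorder ι] [LinearOrder α]
    {s : Finset ι} (H : s.Nonempty) {f : ι → α} {b : ι} (hf : MonotoneOn f s)
    (hb : IsGreatest (s : Set ι) b) : s.sup' H f = f b :=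
  le_antisymm (Finset.sup'_le _ _ fun _ hx => hf hx hb.1 (hb.2 hx)) (Finset.le_sup' f hb.1)

theorem Finset.inf'_eq_of_monotoneOn_of_isLeast {ι α : Type*} [Preorder ι] [LinearOrder α]
    {s : Finset ι} (H : s.Nonempty) {f : ι → α} {a : ι} (hf : MonotoneOn f s)
    (ha : IsLeast (s : Set ι) a) : s.inf' H f = f a :=
  le_antisymm (Finset.inf'_le f ha.1) (Finset.le_inf' _ _ fun _ hx => hf ha.1 hx (ha.2 hx))

section Cycles

variable {n K : ℕ} [NeZero n] {z : Fin (K + 1) → Fin n}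

theorem add_natCast_cycLen (k : Fin (K + 1)) :
    z k + (cycLen n K z k : Fin n) = z (k + 1) := by
  have ha := (z k).isLt
  have hb := (z (k + 1)).isLt
  ext
  rw [Fin.val_add, Fin.val_natCast, Nat.add_mod_mod, cycLen]
  have hlen := Nat.mod_eq_self_or_sub_of_lt_two_mul
    (a := (z (k + 1)).val + n - (z k).val - 1) (n := n) (by omega)
  have hsum := Nat.mod_eq_self_or_sub_of_lt_two_mul
    (a := (z k).val + (((z (k + 1)).val + n - (z k).val - 1) % n + 1)) (n := n) (by omega)
  omega

theorem add_natCast_ne_of_lt_cycLen (hz : StrictMono z) (k m : Fin (K + 1)) {i : ℕ}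
    (hi₁ : 1 ≤ i) (hi : i < cycLen n K z k) : z k + (i : Fin n) ≠ z m := by
  have hbetween : z k < z (k + 1) ∧ (z m ≤ z k ∨ z (k + 1) ≤ z m) ∨
      z (k + 1) ≤ z m ∧ z m ≤ z k := by
    by_cases hk : k = Fin.last K
    · subst hk
      rw [Fin.last_add_one]
      exact Or.inr ⟨hz.monotone (Fin.zero_le m), hz.monotone (Fin.le_last m)⟩
    · have hlt : k < k + 1 := Fin.lt_add_one_iff.mpr (lt_of_le_of_ne (Fin.le_last k) hk)
      exact Or.inl ⟨hz hlt, (le_or_gt m k).imp (hz.monotone ·)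
        fun hkm => hz.monotone (Fin.add_one_le_of_lt hkm)⟩
  have ha := (z k).isLt
  have hb := (z (k + 1)).isLt
  simp only [Fin.lt_def, Fin.le_def] at hbetween
  rw [cycLen] at hi
  intro h
  rw [Fin.ext_iff, Fin.val_add, Fin.val_natCast, Nat.add_mod_mod] at h
  have hlen := Nat.mod_eq_self_or_sub_of_lt_two_mul
    (a := (z (k + 1)).val + n - (z k).val - 1) (n := n) (by omega)
  have hsum := Nat.mod_eq_self_or_sub_of_lt_two_mul (a := (z k).val + i) (n := n) (by omega)
  omega

theorem monotoneOn_cycle {α : Type*} [Preorder α] {Ω : Fin n → α} (hz : StrictMono z)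
    (hstep : ∀ h ∉ Set.range z, Ω h ≤ Ω (h + 1)) (k : Fin (K + 1)) :
    MonotoneOn (fun i : ℕ => Ω (z k + i)) (Set.Icc 1 (cycLen n K z k)) := by
  refine monotoneOn_of_le_succ Set.ordConnected_Icc fun i _ hi hi' => ?_
  rw [Order.succ_eq_add_one] at hi' ⊢
  rw [Nat.cast_add_one, ← add_assoc]
  exact hstep _ fun ⟨m, hm⟩ => add_natCast_ne_of_lt_cycLen hz k m hi.1 hi'.2 hm.symm

theorem sup'_cycle {α : Type*} [LinearOrder α] {Ω : Fin n → α} {k : Fin (K + 1)}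
    (hΩ : MonotoneOn (fun i : ℕ => Ω (z k + i)) (Set.Icc 1 (cycLen n K z k))) :
    (cycle n K z k).sup' (cycle_nonempty n K z k) Ω = Ω (z (k + 1)) := by
  refine (Finset.sup'_image (f := fun i : ℕ => z k + (i : Fin n)) (cycle_nonempty n K z k) Ω).trans
    ((Finset.sup'_eq_of_monotoneOn_of_isGreatest _ ?_ ?_).trans (congrArg Ω (add_natCast_cycLen k)))
  · rwa [Finset.coe_Icc]
  · rw [Finset.coe_Icc]
    exact isGreatest_Icc (Nat.le_add_left 1 _)

theorem inf'_cycle {α : Type*} [LinearOrder α] {Ω : Fin n → α} {k : Fin (K + 1)}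
    (hΩ : MonotoneOn (fun i : ℕ => Ω (z k + i)) (Set.Icc 1 (cycLen n K z k))) :
    (cycle n K z k).inf' (cycle_nonempty n K z k) Ω = Ω (z k + 1) := by
  refine (Finset.inf'_image (f := fun i : ℕ => z k + (i : Fin n)) (cycle_nonempty n K z k) Ω).trans
    ((Finset.inf'_eq_of_monotoneOn_of_isLeast (a := 1) _ ?_ ?_).trans (by simp))
  · rwa [Finset.coe_Icc]
  · rw [Finset.coe_Icc]
    exact isLeast_Icc (Nat.le_add_left 1 _)

theorem sum_eq_sum_cycle_boundary {M : Type*} [AddCommGroup M] {Ω τ β : Fin n → M}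
    (hz : Function.Injective z) (hstat : ∀ h, Ω h - Ω (h + 1) + τ h = β h)
    (hβ : ∀ h ∉ Set.range z, β h = 0) (hτ : ∀ k, τ (z k) = 0) :
    ∑ h, τ h = ∑ k, (Ω (z (k + 1)) - Ω (z k + 1)) :=
  calc ∑ h, τ h = ∑ h, β h := by
        rw [← Finset.sum_congr rfl fun h _ => hstat h, Finset.sum_add_distrib,
          Fintype.sum_sub_comp_add_eq_zero, zero_add]
    _ = ∑ k, β (z k) := (Fintype.sum_of_injective z hz _ β hβ fun _ => rfl).symm
    _ = ∑ k, (Ω (z k) - Ω (z k + 1)) := by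
        refine Finset.sum_congr rfl fun k _ => ?_
        rw [← hstat, hτ, add_zero]
    _ = ∑ k, (Ω (z (k + 1)) - Ω (z k + 1)) := by
        rw [Finset.sum_sub_distrib, Finset.sum_sub_distrib,
          Fintype.sum_equiv (Equiv.addRight 1) (fun k => Ω (z (k + 1)))
            (fun k => Ω (z k)) fun _ => rfl]

end Cycles

theorem storage_marginal_value_cycle_decomposition_general
    {n : ℕ} [NeZero n]
    (u cu : ℝ) (s τ Ω β : Fin n → ℝ)
    -- (i) stationarity in s_h
    (hstat : ∀ h : Fin n, Ω h - Ω (h + 1) + τ h = β h)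
    -- (ii) nonnegativity and complementary slackness for β (duals of s_h ≥ 0)
    (hβ_cs : ∀ h, β h * s h = 0)
    -- (iii) nonnegativity and complementary slackness for τ (duals of s_h ≤ u)
    (hτ_nonneg : ∀ h, 0 ≤ τ h)
    (hτ_cs : ∀ h, τ h * (u - s h) = 0)
    -- u > 0 and stationarity in u at u > 0
    (hu : 0 < u)
    (hcu : cu = ∑ h : Fin n, τ h)
    -- the (nonempty) set of zero-stored-energy hours, enumerated cyclically
    (K : ℕ) (z : Fin (K + 1) → Fin n)
    (hz_mono : StrictMono z)
    (hz_enum : ∀ h : Fin n, s h = 0 ↔ ∃ k : Fin (K + 1), z k = h) :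
    -- Ω is nondecreasing along each cycle
    (∀ k : Fin (K + 1), ∀ i j : ℕ, 1 ≤ i → i ≤ j → j ≤ cycLen n K z k →
        Ω (z k + (i : Fin n)) ≤ Ω (z k + (j : Fin n))) ∧
    -- the marginal value decomposes over cycles ...
    cu = (∑ k : Fin (K + 1),
        ((cycle n K z k).sup' (cycle_nonempty n K z k) Ω
          - (cycle n K z k).inf' (cycle_nonempty n K z k) Ω)) ∧
    -- ... and each cycle's value collapses to its two boundary values of Ω
    cu = ∑ k : Fin (K + 1), (Ω (z (k + 1)) - Ω (z k + 1)) := by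
  have hβ : ∀ h ∉ Set.range z, β h = 0 := fun h hh =>
    (mul_eq_zero.1 (hβ_cs h)).resolve_right fun hs => hh ((hz_enum h).1 hs)
  have hτ : ∀ k, τ (z k) = 0 := fun k =>
    (mul_eq_zero.1 (hτ_cs (z k))).resolve_right <| by
      rw [(hz_enum _).2 ⟨k, rfl⟩, sub_zero]; exact hu.ne'
  have hmono : ∀ k, MonotoneOn (fun i : ℕ => Ω (z k + i)) (Set.Icc 1 (cycLen n K z k)) :=
    monotoneOn_cycle hz_mono fun h hh => by linarith [hstat h, hβ h hh, hτ_nonneg h]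
  have hboundary : cu = ∑ k : Fin (K + 1), (Ω (z (k + 1)) - Ω (z k + 1)) :=
    hcu.trans (sum_eq_sum_cycle_boundary hz_mono.injective hstat hβ hτ)
  refine ⟨fun k i j hi hij hj => hmono k ⟨hi, hij.trans hj⟩ ⟨hi.trans hij, hj⟩ hij,
    hboundary.trans (Finset.sum_congr rfl fun k _ => ?_), hboundary⟩
  rw [sup'_cycle (hmono k), inf'_cycle (hmono k)]

theorem storage_marginal_value_cycle_decomposition
    {n : ℕ} [NeZero n]
    (u cu : ℝ) (s τ Ω β : Fin n → ℝ)
    -- (i) stationarity in s_h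
    (hstat : ∀ h : Fin n, Ω h - Ω (h + 1) + τ h = β h)
    -- (ii) nonnegativity and complementary slackness for β (duals of s_h ≥ 0)
    (hβ_nonneg : ∀ h, 0 ≤ β h)
    (hβ_cs : ∀ h, β h * s h = 0)
    -- (iii) nonnegativity and complementary slackness for τ (duals of s_h ≤ u)
    (hτ_nonneg : ∀ h, 0 ≤ τ h)
    (hτ_cs : ∀ h, τ h * (u - s h) = 0)
    -- (iv) primal feasibility 0 ≤ s_h ≤ u
    (hs_nonneg : ∀ h, 0 ≤ s h)
    (hs_le : ∀ h, s h ≤ u)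
    -- u > 0 and stationarity in u at u > 0
    (hu : 0 < u)
    (hcu : cu = ∑ h : Fin n, τ h)
    -- the (nonempty) set of zero-stored-energy hours, enumerated cyclically
    (K : ℕ) (z : Fin (K + 1) → Fin n)
    (hz_mono : StrictMono z)
    (hz_enum : ∀ h : Fin n, s h = 0 ↔ ∃ k : Fin (K + 1), z k = h) :
    -- Ω is nondecreasing along each cycle
    (∀ k : Fin (K + 1), ∀ i j : ℕ, 1 ≤ i → i ≤ j → j ≤ cycLen n K z k →
        Ω (z k + (i : Fin n)) ≤ Ω (z k + (j : Fin n))) ∧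
    -- the marginal value decomposes over cycles ...
    cu = (∑ k : Fin (K + 1),
        ((cycle n K z k).sup' (cycle_nonempty n K z k) Ω
          - (cycle n K z k).inf' (cycle_nonempty n K z k) Ω)) ∧
    -- ... and each cycle's value collapses to its two boundary values of Ω
    cu = ∑ k : Fin (K + 1), (Ω (z (k + 1)) - Ω (z k + 1)) :=
  storage_marginal_value_cycle_decomposition_general u cu s τ Ω β hstat hβ_cs hτ_nonneg hτ_cs hu hcu
    K z hz_mono hz_enum
end

section
/- Assume the storage-related KKT conditions of the general aggregated formulation hold and u > 0. Then for every state σ with s̄_σ > 0, the rent on the energy capacity constraint equals the expected price difference τ_σ = p_σ·Ω − Ω_σ; and in fact for every state σ, τ_σ = (p_σ·Ω − Ω_σ)^+. -/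
/-!
STATEMENT 6: Under the storage-related KKT conditions of the general
aggregated formulation (states indexed by `Fin S`, `S ≥ 1`, transition
matrix `P` with rows `p σ`, and `p σ · Ω = Σ σ', P σ σ' * Ω σ'`), with
`u > 0`: for every state `σ` with `s̄ σ > 0`, the rent on the energy
capacity constraint equals the expected price difference
`τ σ = p σ · Ω - Ω σ`; and in fact for every state `σ`,
`τ σ = (p σ · Ω - Ω σ)⁺`.
-/

theorem aggregated_storage_rent_eq_expected_price_difference
    {S : ℕ} (hS : 1 ≤ S)
    (u cu : ℝ) (P : Fin S → Fin S → ℝ) (sbar τ Ω β : Fin S → ℝ)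
    -- (i) stationarity in s̄_σ
    (hstat : ∀ σ : Fin S, Ω σ - (∑ σ' : Fin S, P σ σ' * Ω σ') + τ σ = β σ)
    -- (ii) nonnegativity and complementary slackness for β (duals of s̄_σ ≥ 0)
    (hβ_nonneg : ∀ σ, 0 ≤ β σ)
    (hβ_cs : ∀ σ, β σ * sbar σ = 0)
    -- (iii) nonnegativity and complementary slackness for τ (duals of s̄_σ ≤ u)
    (hτ_nonneg : ∀ σ, 0 ≤ τ σ)
    (hτ_cs : ∀ σ, τ σ * (u - sbar σ) = 0)
    -- (iv) primal feasibility 0 ≤ s̄_σ ≤ u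
    (hs_nonneg : ∀ σ, 0 ≤ sbar σ)
    (hs_le : ∀ σ, sbar σ ≤ u)
    -- u > 0
    (hu : 0 < u) :
    (∀ σ : Fin S, 0 < sbar σ →
        τ σ = (∑ σ' : Fin S, P σ σ' * Ω σ') - Ω σ) ∧
    (∀ σ : Fin S,
        τ σ = max ((∑ σ' : Fin S, P σ σ' * Ω σ') - Ω σ) 0) := by
  have key : ∀ σ : Fin S, 0 < sbar σ →
      τ σ = (∑ σ' : Fin S, P σ σ' * Ω σ') - Ω σ := by
    intro σ hpos
    have hβ : β σ = 0 := by
      rcases mul_eq_zero.mp (hβ_cs σ) with h | h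
      · exact h
      · exact absurd h (ne_of_gt hpos)
    have := hstat σ
    rw [hβ] at this
    linarith
  refine ⟨key, fun σ => ?_⟩
  rcases lt_or_eq_of_le (hs_nonneg σ) with hpos | hzero
  · rw [key σ hpos, max_eq_left]
    have := key σ hpos
    linarith [hτ_nonneg σ, this]
  · have hτ0 : τ σ = 0 := by
      rcases mul_eq_zero.mp (hτ_cs σ) with h | h
      · exact h
      · exfalso; rw [← hzero] at h; linarith
    have := hstat σ
    have hβ := hβ_nonneg σ
    rw [hτ0, max_eq_right] <;> linarith
end

section
/- Assume the storage-related KKT conditions of the general aggregated formulation hold, u > 0, and additionally c^u = Σ_{σ=0}^{S−1} τ_σ (stationarity in u at u > 0). Then the marginal value of storage energy capacity equals the sum over states of the positive part of the difference between the expected future price and the current price: c^u = Σ_{σ=0}^{S−1} (p_σ·Ω − Ω_σ)^+. -/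
/-!
STATEMENT 7: Under the storage-related KKT conditions of the general
aggregated formulation (states indexed by `Fin S`, `S ≥ 1`, transition
matrix `P` with rows `p σ`, and `p σ · Ω = Σ σ', P σ σ' * Ω σ'`), with
`u > 0` and the stationarity condition in `u` (`c^u = Σ_σ τ_σ`), the
marginal value of storage energy capacity equals the sum over states of
the positive part of the difference between the expected future price and
the current price: `c^u = Σ_σ (p σ · Ω - Ω σ)⁺`.
-/

theorem aggregated_storage_marginal_value
    {S : ℕ} (hS : 1 ≤ S)
    (u cu : ℝ) (P : Fin S → Fin S → ℝ) (sbar τ Ω β : Fin S → ℝ)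
    -- (i) stationarity in s̄_σ
    (hstat : ∀ σ : Fin S, Ω σ - (∑ σ' : Fin S, P σ σ' * Ω σ') + τ σ = β σ)
    -- (ii) nonnegativity and complementary slackness for β (duals of s̄_σ ≥ 0)
    (hβ_nonneg : ∀ σ, 0 ≤ β σ)
    (hβ_cs : ∀ σ, β σ * sbar σ = 0)
    -- (iii) nonnegativity and complementary slackness for τ (duals of s̄_σ ≤ u)
    (hτ_nonneg : ∀ σ, 0 ≤ τ σ)
    (hτ_cs : ∀ σ, τ σ * (u - sbar σ) = 0)
    -- (iv) primal feasibility 0 ≤ s̄_σ ≤ u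
    (hs_nonneg : ∀ σ, 0 ≤ sbar σ)
    (hs_le : ∀ σ, sbar σ ≤ u)
    -- u > 0
    (hu : 0 < u)
    -- stationarity in u at u > 0
    (hcu : cu = ∑ σ : Fin S, τ σ) :
    cu = ∑ σ : Fin S, max ((∑ σ' : Fin S, P σ σ' * Ω σ') - Ω σ) 0 := by
  rw [hcu]
  refine Finset.sum_congr rfl fun σ _ => ?_
  have h := hstat σ
  rcases lt_or_eq_of_le (hτ_nonneg σ) with hpos | hzero
  · -- τ σ > 0 ⇒ sbar σ = u > 0 ⇒ β σ = 0
    have hsu : sbar σ = u := by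
      have := hτ_cs σ
      rcases mul_eq_zero.1 this with h1 | h2
      · exact absurd h1 (ne_of_gt hpos)
      · linarith
    have hβ0 : β σ = 0 := by
      have := hβ_cs σ
      rcases mul_eq_zero.1 this with h1 | h2
      · exact h1
      · rw [hsu] at h2; linarith
    have : τ σ = (∑ σ' : Fin S, P σ σ' * Ω σ') - Ω σ := by
      rw [hβ0] at h; linarith
    rw [max_eq_left (by linarith)]
    linarith
  · -- τ σ = 0 ⇒ pΩ − Ω ≤ 0
    have : (∑ σ' : Fin S, P σ σ' * Ω σ') - Ω σ ≤ 0 := by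
      have := hβ_nonneg σ
      linarith
    rw [max_eq_right this]
    linarith
end

section
/- Let an admissible aggregation of the hourly data be given, and let (x̄, z, t, u, r̄, s̄) be any feasible point of the aggregated model. Define the lifted hourly point by x_{g,h} := x̄_{g,Γ(h)}, r_h := r̄_{Γ(h)}, z, t, u unchanged, and, for an hour h that is the i-th hour (i = 1,…,q_σ) of a block of state σ, s_h := s̄_{π(σ)} + i·r̄_σ. Then the lifted point is feasible for the core model and its core-model objective value equals the aggregated objective value of (x̄, z, t, u, r̄, s̄). Consequently, the optimal value (infimum) of the core model is at most the optimal value (infimum) of the aggregated model. -/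
/-- A point of the core (hourly) planning LP: generation `x`, generator
capacities `z`, storage power capacity `t`, storage energy capacity `u`,
net charge `r`, and storage levels `s`. -/
structure CorePoint (m n : ℕ) where
  x : Fin m → Fin n → ℝ
  z : Fin m → ℝ
  t : ℝ
  u : ℝ
  r : Fin n → ℝ
  s : Fin n → ℝ

/-- Feasibility for the core model (hours cyclic, indices mod `n`). -/
def CoreFeasible {m n : ℕ} [NeZero n] (d : Fin n → ℝ) (a : Fin m → Fin n → ℝ)
    (p : CorePoint m n) : Prop :=
  (∀ g h, 0 ≤ p.x g h) ∧ (∀ g, 0 ≤ p.z g) ∧ 0 ≤ p.t ∧ 0 ≤ p.u ∧ (∀ h, 0 ≤ p.s h) ∧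
  (∀ h, (∑ g, p.x g h) + p.r h = d h) ∧
  (∀ g h, p.x g h ≤ a g h * p.z g) ∧
  (∀ h, p.s h = p.s (h - 1) + p.r h) ∧
  (∀ h, |p.r h| ≤ p.t) ∧
  (∀ h, p.s h ≤ p.u)

/-- Objective of the core model. -/
def CoreObj {m n : ℕ} (cx cz : Fin m → ℝ) (ct cu : ℝ) (p : CorePoint m n) : ℝ :=
  (∑ g, ∑ h, cx g * p.x g h) + (∑ g, cz g * p.z g) + ct * p.t + cu * p.u

/-- A point of the aggregated planning LP, with variables indexed by
states `Fin S` instead of hours. -/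
structure AggPoint (m S : ℕ) where
  x : Fin m → Fin S → ℝ
  z : Fin m → ℝ
  t : ℝ
  u : ℝ
  r : Fin S → ℝ
  s : Fin S → ℝ

/-- An admissible aggregation of the hourly data: a surjection `Γ` from
hours to states such that demand `d` and availability `a` depend only on
the state; the cyclic hour sequence decomposes into maximal runs
("blocks") of consecutive hours with constant state, every block of state
`σ` has the same length `q σ ≥ 1`, and every block of state `σ` is
immediately preceded by a block of state `prev σ` (each state has a unique
incoming connection; uniqueness of the outgoing connection follows).  The
block structure is encoded by `idx h`, the (1-based) position of hour `h`
within its block. -/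
structure AdmissibleAgg (m n S : ℕ) [NeZero n] (d : Fin n → ℝ)
    (a : Fin m → Fin n → ℝ) where
  Γ : Fin n → Fin S
  q : Fin S → ℕ
  prev : Fin S → Fin S
  idx : Fin n → ℕ
  surj : Function.Surjective Γ
  d_compat : ∀ h h', Γ h = Γ h' → d h = d h'
  a_compat : ∀ g h h', Γ h = Γ h' → a g h = a g h'
  q_pos : ∀ σ, 1 ≤ q σ
  idx_one_le : ∀ h, 1 ≤ idx h
  idx_le : ∀ h, idx h ≤ q (Γ h)
  idx_step : ∀ h, idx h < q (Γ h) → idx (h + 1) = idx h + 1 ∧ Γ (h + 1) = Γ h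
  idx_end : ∀ h, idx h = q (Γ h) → idx (h + 1) = 1 ∧ Γ (h + 1) ≠ Γ h
  pred_block : ∀ h, idx h = 1 → Γ (h - 1) = prev (Γ h)

/-- The weight of a state: the number of hours mapped to it. -/
def weight {n S : ℕ} (Γ : Fin n → Fin S) (σ : Fin S) : ℕ :=
  (Finset.univ.filter fun h => Γ h = σ).card

/-- Feasibility for the aggregated model (the aggregated demand `d σ` and
availability `a g σ` are the common values of `d h` and `a g h` over the
fiber `Γ⁻¹ σ`, expressed here fiberwise). -/
def AggFeasible {m n S : ℕ} [NeZero n] {d : Fin n → ℝ} {a : Fin m → Fin n → ℝ}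
    (A : AdmissibleAgg m n S d a) (p : AggPoint m S) : Prop :=
  (∀ g σ, 0 ≤ p.x g σ) ∧ (∀ g, 0 ≤ p.z g) ∧ 0 ≤ p.t ∧ 0 ≤ p.u ∧ (∀ σ, 0 ≤ p.s σ) ∧
  (∀ h, (∑ g, p.x g (A.Γ h)) + p.r (A.Γ h) = d h) ∧
  (∀ g h, p.x g (A.Γ h) ≤ a g h * p.z g) ∧
  (∀ σ, p.s σ = p.s (A.prev σ) + (A.q σ : ℝ) * p.r σ) ∧
  (∀ σ, |p.r σ| ≤ p.t) ∧
  (∀ σ, p.s σ ≤ p.u)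

/-- Objective of the aggregated model, with weights `w σ = |Γ⁻¹ σ|`. -/
def AggObj {m n S : ℕ} (Γ : Fin n → Fin S) (cx cz : Fin m → ℝ) (ct cu : ℝ)
    (p : AggPoint m S) : ℝ :=
  (∑ g, ∑ σ, (weight Γ σ : ℝ) * cx g * p.x g σ) + (∑ g, cz g * p.z g)
    + ct * p.t + cu * p.u

/-- The lifted hourly point of an aggregated point: `x g h := x̄ g (Γ h)`,
`r h := r̄ (Γ h)`, `z, t, u` unchanged, and for the `i`-th hour of a block
of state `σ`, `s h := s̄ (prev σ) + i * r̄ σ`. -/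
def liftPoint {m n S : ℕ} [NeZero n] {d : Fin n → ℝ} {a : Fin m → Fin n → ℝ}
    (A : AdmissibleAgg m n S d a) (p : AggPoint m S) : CorePoint m n where
  x := fun g h => p.x g (A.Γ h)
  z := p.z
  t := p.t
  u := p.u
  r := fun h => p.r (A.Γ h)
  s := fun h => p.s (A.prev (A.Γ h)) + (A.idx h : ℝ) * p.r (A.Γ h)

/-!
STATEMENT 9: Given an admissible aggregation, lifting any feasible point of
the aggregated model yields a feasible point of the core model with the
same objective value; consequently, the optimal value (infimum) of the
core model is at most the optimal value (infimum) of the aggregated model.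
-/

lemma sum_fiber_mul {n S : ℕ} (Γ : Fin n → Fin S) (f : Fin S → ℝ) :
    ∑ h, f (Γ h) = ∑ σ, (weight Γ σ : ℝ) * f σ := by
  rw [← Finset.sum_fiberwise Finset.univ Γ (fun h => f (Γ h))]
  refine Finset.sum_congr rfl fun σ _ => ?_
  rw [Finset.sum_congr rfl
      (fun h hh => by rw [(Finset.mem_filter.1 hh).2] :
        ∀ h ∈ Finset.univ.filter fun h => Γ h = σ, f (Γ h) = f σ),
    Finset.sum_const, nsmul_eq_mul]
  rfl

theorem lift_feasible_and_value_eq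
    {m n S : ℕ} [NeZero n]
    (cx cz : Fin m → ℝ) (ct cu : ℝ)
    (d : Fin n → ℝ) (a : Fin m → Fin n → ℝ)
    (A : AdmissibleAgg m n S d a) :
    (∀ p : AggPoint m S, AggFeasible A p →
        CoreFeasible d a (liftPoint A p) ∧
        CoreObj cx cz ct cu (liftPoint A p) = AggObj A.Γ cx cz ct cu p) ∧
    sInf (Real.toEReal ''
        {v : ℝ | ∃ p : CorePoint m n, CoreFeasible d a p ∧ CoreObj cx cz ct cu p = v})
      ≤ sInf (Real.toEReal ''
        {v : ℝ | ∃ p : AggPoint m S, AggFeasible A p ∧ AggObj A.Γ cx cz ct cu p = v}) := by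
  have main : ∀ p : AggPoint m S, AggFeasible A p →
      CoreFeasible d a (liftPoint A p) ∧
      CoreObj cx cz ct cu (liftPoint A p) = AggObj A.Γ cx cz ct cu p := by
    intro p hp
    obtain ⟨hx, hz, ht, hu, hs, hdem, hcap, hsto, hpow, hene⟩ := hp
    -- generic bound on intermediate storage levels
    have skey : ∀ h : Fin n,
        0 ≤ p.s (A.prev (A.Γ h)) + (A.idx h : ℝ) * p.r (A.Γ h) ∧
        p.s (A.prev (A.Γ h)) + (A.idx h : ℝ) * p.r (A.Γ h) ≤ p.u := by
      intro h
      set σ := A.Γ h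
      have hq : p.s σ = p.s (A.prev σ) + (A.q σ : ℝ) * p.r σ := hsto σ
      have h1 : (1 : ℝ) ≤ (A.idx h : ℝ) := by exact_mod_cast A.idx_one_le h
      have h2 : (A.idx h : ℝ) ≤ (A.q σ : ℝ) := by exact_mod_cast A.idx_le h
      have hs0 : 0 ≤ p.s (A.prev σ) := hs _
      have hsσ : 0 ≤ p.s σ := hs _
      have hu0 : p.s (A.prev σ) ≤ p.u := hene _
      have huσ : p.s σ ≤ p.u := hene _
      rcases le_total 0 (p.r σ) with hr | hr
      · constructor
        · nlinarith
        · nlinarith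
      · constructor
        · nlinarith
        · nlinarith
    refine ⟨⟨fun g h => hx g _, hz, ht, hu, fun h => (skey h).1,
        fun h => hdem h, fun g h => hcap g h, ?_, fun h => hpow _, fun h => (skey h).2⟩, ?_⟩
    · -- storage recursion
      intro h
      have hsucc : h - 1 + 1 = h := sub_add_cancel h 1
      show p.s (A.prev (A.Γ h)) + (A.idx h : ℝ) * p.r (A.Γ h)
          = p.s (A.prev (A.Γ (h - 1))) + (A.idx (h - 1) : ℝ) * p.r (A.Γ (h - 1))
            + p.r (A.Γ h)
      by_cases hi : A.idx h = 1
      · have hprev : A.Γ (h - 1) = A.prev (A.Γ h) := A.pred_block h hi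
        have hend : A.idx (h - 1) = A.q (A.Γ (h - 1)) := by
          rcases lt_or_eq_of_le (A.idx_le (h - 1)) with hlt | heq
          · exfalso
            have := (A.idx_step (h - 1) hlt).1
            rw [hsucc, hi] at this
            have := A.idx_one_le (h - 1)
            omega
          · exact heq
        have : p.s (A.Γ (h - 1)) = p.s (A.prev (A.Γ (h - 1)))
            + (A.q (A.Γ (h - 1)) : ℝ) * p.r (A.Γ (h - 1)) := hsto _
        rw [hprev] at this ⊢
        rw [hend, hprev]
        rw [← this, hi]
        push_cast
        ring
      · have hstep : A.idx (h - 1) < A.q (A.Γ (h - 1)) := by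
          rcases lt_or_eq_of_le (A.idx_le (h - 1)) with hlt | heq
          · exact hlt
          · exfalso
            have := (A.idx_end (h - 1) heq).1
            rw [hsucc] at this
            exact hi this
        obtain ⟨hidx, hΓ⟩ := A.idx_step (h - 1) hstep
        rw [hsucc] at hidx hΓ
        rw [hΓ, hidx]
        push_cast
        ring
    · -- objective equality
      unfold CoreObj AggObj liftPoint
      congr 1
      congr 1
      congr 1
      refine Finset.sum_congr rfl fun g _ => ?_
      have := sum_fiber_mul A.Γ (fun σ => cx g * p.x g σ)
      simpa [mul_assoc, mul_comm, mul_left_comm] using this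
  refine ⟨main, sInf_le_sInf ?_⟩
  apply Set.image_mono
  rintro v ⟨p, hp, rfl⟩
  exact ⟨liftPoint A p, (main p hp).1, (main p hp).2⟩
end

section
/- Let an admissible aggregation of the hourly data be given, and assume the core model attains its minimum. Then the core model attains its minimum at a point in which the generation variables x_{g,h} and the net-charge variables r_h depend only on the state Γ(h), and the storage level at the final hour of each block depends only on the block's state (i.e., all hours mapped to the same state carry identical dispatch decisions, and all blocks of the same state end at the same stored-energy level). -/
/-!
STATEMENT 10: Given an admissible aggregation, if the core model attains
its minimum, then it attains its minimum at a point in which the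
generation variables `x g h` and net-charge variables `r h` depend only on
the state `Γ h`, and the storage level at the final hour of each block
depends only on the block's state.
-/

/- Average an optimal hourly point over the hours of each state, and its storage levels over the
ends of the blocks of each state. Since the data are constant on states, this is a feasible point
of the aggregated model with the same cost; lifting it back, with storage growing linearly inside
each block, gives a feasible hourly point of the same cost, hence an optimal one, which is
symmetric by construction. The aggregated storage balance comes from telescoping the hourly
balance over the fiber of a state `σ`: what remains are the block ends of `σ` and of `prev σ`,
which are equinumerous, while the fiber has exactly as many hours at each block position as
there are block ends, i.e. `q σ` times as many. Intermediate storage levels stay in `[0, u]` by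
convexity. -/

open Finset
open scoped BigOperators

lemma Convex.add_mul_mem {s : Set ℝ} (hs : Convex ℝ s) {a r q i : ℝ} (ha : a ∈ s)
    (haq : a + q * r ∈ s) (hi : 0 ≤ i) (hiq : i ≤ q) : a + i * r ∈ s := by
  rcases hi.eq_or_lt with rfl | hi
  · simpa using ha
  have hq : 0 < q := hi.trans_le hiq
  have := hs.add_smul_mem ha haq ⟨div_nonneg hi.le hq.le, (div_le_one₀ hq).2 hiq⟩
  rwa [smul_eq_mul, ← mul_assoc, div_mul_cancel₀ _ hq.ne'] at this

namespace AdmissibleAgg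

variable {m n S : ℕ} [NeZero n] {d : Fin n → ℝ} {a : Fin m → Fin n → ℝ}
  (A : AdmissibleAgg m n S d a)

def fiber (σ : Fin S) : Finset (Fin n) := univ.filter fun h => A.Γ h = σ

def blockEnds (σ : Fin S) : Finset (Fin n) := {h ∈ A.fiber σ | A.idx h = A.q σ}

lemma mem_fiber {σ : Fin S} {h : Fin n} : h ∈ A.fiber σ ↔ A.Γ h = σ := by
  simp [fiber]

lemma mem_blockEnds {σ : Fin S} {h : Fin n} :
    h ∈ A.blockEnds σ ↔ A.Γ h = σ ∧ A.idx h = A.q σ := by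
  simp [blockEnds, mem_fiber]

lemma card_fiber_eq_weight (σ : Fin S) : #(A.fiber σ) = weight A.Γ σ := rfl

lemma idx_succ_eq_one_iff (h : Fin n) : A.idx (h + 1) = 1 ↔ A.idx h = A.q (A.Γ h) := by
  refine ⟨fun h1 => ?_, fun he => (A.idx_end h he).1⟩
  by_contra hne
  have := (A.idx_step h (lt_of_le_of_ne (A.idx_le h) hne)).1
  have := A.idx_one_le h
  omega

lemma step_of_two_le_idx_succ {h : Fin n} (h2 : 2 ≤ A.idx (h + 1)) :
    A.Γ (h + 1) = A.Γ h ∧ A.idx (h + 1) = A.idx h + 1 := by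
  have hne : A.idx h ≠ A.q (A.Γ h) := fun he => by
    rw [(A.idx_succ_eq_one_iff h).2 he] at h2; omega
  obtain ⟨hidx, hΓ⟩ := A.idx_step h (lt_of_le_of_ne (A.idx_le h) hne)
  exact ⟨hΓ, hidx⟩

lemma prev_Γ_succ {h : Fin n} (he : A.idx h = A.q (A.Γ h)) : A.prev (A.Γ (h + 1)) = A.Γ h := by
  simpa using (A.pred_block (h + 1) (A.idx_end h he).1).symm

lemma fiber_nonempty (σ : Fin S) : (A.fiber σ).Nonempty := by
  obtain ⟨h, rfl⟩ := A.surj σ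
  exact ⟨h, A.mem_fiber.2 rfl⟩

/-- An hour of state `σ` with maximal position in its block must end the block. -/
lemma blockEnds_nonempty (σ : Fin S) : (A.blockEnds σ).Nonempty := by
  obtain ⟨h, hh, hmax⟩ := (A.fiber σ).exists_max_image A.idx (A.fiber_nonempty σ)
  rw [mem_fiber] at hh
  refine ⟨h, A.mem_blockEnds.2 ⟨hh, ?_⟩⟩
  by_contra hne
  obtain ⟨hidx, hΓ⟩ := A.idx_step h (lt_of_le_of_ne (A.idx_le h) (hh ▸ hne))
  have := hmax (h + 1) (A.mem_fiber.2 (hΓ.trans hh))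
  omega

lemma prev_bijective : Function.Bijective A.prev := by
  refine Finite.surjective_iff_bijective.1 fun σ => ?_
  obtain ⟨h, hh⟩ := A.blockEnds_nonempty σ
  obtain ⟨hΓ, hidx⟩ := A.mem_blockEnds.1 hh
  exact ⟨A.Γ (h + 1), (A.prev_Γ_succ (hΓ ▸ hidx)).trans hΓ⟩

lemma succ_mem_fiber_iff {σ : Fin S} {h : Fin n} :
    h + 1 ∈ A.fiber σ ↔ h ∈ {h ∈ A.fiber σ | A.idx h ≠ A.q σ} ∨ h ∈ A.blockEnds (A.prev σ) := by
  simp only [mem_filter, mem_fiber, mem_blockEnds]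
  by_cases he : A.idx h = A.q (A.Γ h)
  · have hprev := A.prev_Γ_succ he
    constructor
    · rintro rfl
      exact Or.inr ⟨hprev.symm, hprev ▸ he⟩
    · rintro (⟨rfl, hne⟩ | ⟨hΓ, -⟩)
      · exact absurd he hne
      · exact A.prev_bijective.injective (hprev.trans hΓ)
  · obtain ⟨-, hΓ⟩ := A.idx_step h (lt_of_le_of_ne (A.idx_le h) he)
    rw [hΓ]
    constructor
    · rintro rfl
      exact Or.inl ⟨rfl, he⟩
    · rintro (⟨hσ, -⟩ | ⟨hσ, hidx⟩)
      · exact hσ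
      · exact absurd (hσ ▸ hidx) he

lemma sum_fiber_sub_one (f : Fin n → ℝ) (σ : Fin S) :
    ∑ h ∈ A.fiber σ, f (h - 1) + ∑ h ∈ A.blockEnds σ, f h
      = ∑ h ∈ A.fiber σ, f h + ∑ h ∈ A.blockEnds (A.prev σ), f h := by
  have hdisj : Disjoint {h ∈ A.fiber σ | A.idx h ≠ A.q σ} (A.blockEnds (A.prev σ)) := by
    refine disjoint_left.2 fun h h₁ h₂ => ?_
    simp only [mem_filter, mem_fiber, mem_blockEnds] at h₁ h₂
    exact h₁.2 (h₁.1 ▸ h₂.1 ▸ h₂.2)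
  have hshift : ∑ h ∈ A.fiber σ, f (h - 1)
      = ∑ h ∈ {h ∈ A.fiber σ | A.idx h ≠ A.q σ} ∪ A.blockEnds (A.prev σ), f h :=
    sum_equiv (Equiv.subRight 1) (fun h => by
      rw [Equiv.subRight_apply, mem_union, ← A.succ_mem_fiber_iff, sub_add_cancel]) (fun _ _ => rfl)
  rw [hshift, sum_union hdisj, ← sum_filter_add_sum_filter_not (A.fiber σ) (A.idx · = A.q σ)]
  simp only [blockEnds]
  ring

lemma card_blockEnds_prev (σ : Fin S) : #(A.blockEnds (A.prev σ)) = #(A.blockEnds σ) := by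
  have := A.sum_fiber_sub_one (fun _ => 1) σ
  simp only [sum_const, nsmul_one, add_right_inj] at this
  exact_mod_cast this.symm

lemma sum_blockEnds_eq {s r : Fin n → ℝ} (hsr : ∀ h, s h = s (h - 1) + r h) (σ : Fin S) :
    ∑ h ∈ A.blockEnds σ, s h = ∑ h ∈ A.blockEnds (A.prev σ), s h + ∑ h ∈ A.fiber σ, r h := by
  have hr : ∑ h ∈ A.fiber σ, r h = ∑ h ∈ A.fiber σ, s h - ∑ h ∈ A.fiber σ, s (h - 1) := by
    rw [← sum_sub_distrib]
    exact sum_congr rfl fun h _ => by linarith [hsr h]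
  linarith [A.sum_fiber_sub_one s σ]

lemma card_filter_idx_succ {σ : Fin S} {k : ℕ} (hk : 1 ≤ k) (hkq : k < A.q σ) :
    #{h ∈ A.fiber σ | A.idx h = k + 1} = #{h ∈ A.fiber σ | A.idx h = k} := by
  refine (card_nbij' (· + 1) (· - 1) (fun h hh => ?_) (fun h hh => ?_)
    (fun h _ => add_sub_cancel_right h 1) (fun h _ => sub_add_cancel h 1)).symm
  · simp only [mem_coe, mem_filter, mem_fiber] at hh ⊢
    obtain ⟨hidx, hΓ⟩ := A.idx_step h (by rw [hh.1, hh.2]; exact hkq)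
    exact ⟨hΓ.trans hh.1, by rw [hidx, hh.2]⟩
  · simp only [mem_coe, mem_filter, mem_fiber] at hh ⊢
    have h2 : 2 ≤ A.idx (h - 1 + 1) := by rw [sub_add_cancel, hh.2]; omega
    obtain ⟨hΓ, hidx⟩ := A.step_of_two_le_idx_succ h2
    rw [sub_add_cancel] at hΓ hidx
    exact ⟨hΓ ▸ hh.1, by omega⟩

lemma card_filter_idx_eq {σ : Fin S} {k : ℕ} (hk : 1 ≤ k) (hkq : k ≤ A.q σ) :
    #{h ∈ A.fiber σ | A.idx h = k} = #(A.blockEnds σ) := by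
  induction hkq using Nat.decreasingInduction with
  | self => rfl
  | of_succ k hkq ih => rw [← A.card_filter_idx_succ hk hkq, ih (by omega)]

lemma card_fiber (σ : Fin S) : #(A.fiber σ) = A.q σ * #(A.blockEnds σ) := by
  have hmaps : Set.MapsTo A.idx (A.fiber σ) (Icc 1 (A.q σ)) := fun h hh => by
    rw [mem_coe, mem_fiber] at hh
    exact mem_Icc.2 ⟨A.idx_one_le h, hh ▸ A.idx_le h⟩
  rw [card_eq_sum_card_fiberwise hmaps,
    sum_congr rfl fun k hk => A.card_filter_idx_eq (mem_Icc.1 hk).1 (mem_Icc.1 hk).2]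
  simp

lemma sum_comp_Γ (v : Fin S → ℝ) : ∑ h, v (A.Γ h) = ∑ σ, (weight A.Γ σ : ℝ) * v σ := by
  rw [← sum_fiberwise univ A.Γ]
  refine sum_congr rfl fun σ _ => ?_
  rw [sum_congr rfl fun h hh => by rw [(mem_filter.1 hh).2], sum_const, nsmul_eq_mul]
  rfl

lemma sum_weight_mul_expect (f : Fin n → ℝ) :
    ∑ σ, (weight A.Γ σ : ℝ) * 𝔼 h ∈ A.fiber σ, f h = ∑ h, f h := by
  simp_rw [← card_fiber_eq_weight, ← nsmul_eq_mul, card_smul_expect]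
  exact sum_fiberwise univ A.Γ f

noncomputable def average (p : CorePoint m n) : AggPoint m S where
  x g σ := 𝔼 h ∈ A.fiber σ, p.x g h
  z := p.z
  t := p.t
  u := p.u
  r σ := 𝔼 h ∈ A.fiber σ, p.r h
  s σ := 𝔼 h ∈ A.blockEnds σ, p.s h

lemma aggFeasible_average {p : CorePoint m n} (hp : CoreFeasible d a p) :
    AggFeasible A (A.average p) := by
  obtain ⟨hx, hz, ht, hu, hs, hdem, hcap, hsr, hrt, hsu⟩ := hp
  refine ⟨fun g σ => expect_nonneg fun h _ => hx g h, hz, ht, hu,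
    fun σ => expect_nonneg fun h _ => hs h, fun h => ?_, fun g h => ?_, fun σ => ?_,
    fun σ => (abs_expect_le _ _).trans (expect_le (A.fiber_nonempty σ) fun h _ => hrt h),
    fun σ => expect_le (A.blockEnds_nonempty σ) fun h _ => hsu h⟩
  · calc ∑ g, (A.average p).x g (A.Γ h) + (A.average p).r (A.Γ h)
        = 𝔼 h' ∈ A.fiber (A.Γ h), ((∑ g, p.x g h') + p.r h') := by
          simp only [average, ← expect_sum_comm, expect_add_distrib]
      _ = 𝔼 _h' ∈ A.fiber (A.Γ h), d h := expect_congr rfl fun h' hh' =>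
          (hdem h').trans (A.d_compat h' h (A.mem_fiber.1 hh'))
      _ = d h := expect_const (A.fiber_nonempty _) _
  · exact expect_le (A.fiber_nonempty _) fun h' hh' =>
      (hcap g h').trans_eq (by rw [A.a_compat g h' h (A.mem_fiber.1 hh')]; rfl)
  · have hE : (#(A.blockEnds σ) : ℝ) ≠ 0 := by
      exact_mod_cast (A.blockEnds_nonempty σ).card_pos.ne'
    have hq : (A.q σ : ℝ) ≠ 0 := Nat.cast_ne_zero.2 (by have := A.q_pos σ; omega)
    simp only [average, expect_eq_sum_div_card, A.sum_blockEnds_eq hsr σ, A.card_blockEnds_prev,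
      A.card_fiber]
    push_cast
    field_simp

lemma aggObj_average (cx cz : Fin m → ℝ) (ct cu : ℝ) (p : CorePoint m n) :
    AggObj A.Γ cx cz ct cu (A.average p) = CoreObj cx cz ct cu p := by
  simp only [AggObj, CoreObj, average, mul_assoc, mul_left_comm _ (cx _), ← mul_sum,
    A.sum_weight_mul_expect]

lemma coreObj_liftPoint (cx cz : Fin m → ℝ) (ct cu : ℝ) (p : AggPoint m S) :
    CoreObj cx cz ct cu (liftPoint A p) = AggObj A.Γ cx cz ct cu p := by
  simp only [CoreObj, AggObj, liftPoint, mul_assoc]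
  congr 3
  exact sum_congr rfl fun g _ => A.sum_comp_Γ fun σ => cx g * p.x g σ

lemma liftPoint_storage_balance {p : AggPoint m S}
    (hbal : ∀ σ, p.s σ = p.s (A.prev σ) + (A.q σ : ℝ) * p.r σ) (h : Fin n) :
    (liftPoint A p).s h = (liftPoint A p).s (h - 1) + (liftPoint A p).r h := by
  simp only [liftPoint]
  rcases (A.idx_one_le h).eq_or_lt with h1 | h2
  · have hend : A.idx (h - 1) = A.q (A.Γ (h - 1)) := by
      rw [← A.idx_succ_eq_one_iff, sub_add_cancel, h1]
    rw [← h1, hend, ← hbal, A.pred_block h h1.symm]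
    push_cast
    ring
  · obtain ⟨hΓ, hidx⟩ := A.step_of_two_le_idx_succ (h := h - 1) (by rwa [sub_add_cancel])
    rw [sub_add_cancel] at hΓ hidx
    rw [hΓ, hidx]
    push_cast
    ring

lemma coreFeasible_liftPoint {p : AggPoint m S} (hp : AggFeasible A p) :
    CoreFeasible d a (liftPoint A p) := by
  obtain ⟨hx, hz, ht, hu, hs, hdem, hcap, hbal, hrt, hsu⟩ := hp
  have hlevel (h : Fin n) :
      p.s (A.prev (A.Γ h)) + (A.idx h : ℝ) * p.r (A.Γ h) ∈ Set.Icc 0 p.u := by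
    have hend : p.s (A.prev (A.Γ h)) + (A.q (A.Γ h) : ℝ) * p.r (A.Γ h) ∈ Set.Icc 0 p.u := by
      rw [← hbal]
      exact ⟨hs _, hsu _⟩
    exact (convex_Icc 0 p.u).add_mul_mem ⟨hs _, hsu _⟩ hend (Nat.cast_nonneg _)
      (by exact_mod_cast A.idx_le h)
  exact ⟨fun g h => hx g (A.Γ h), hz, ht, hu, fun h => (hlevel h).1, hdem, hcap,
    A.liftPoint_storage_balance hbal, fun h => hrt _, fun h => (hlevel h).2⟩

end AdmissibleAgg

theorem core_attains_min_at_symmetric_point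
    {m n S : ℕ} [NeZero n]
    (cx cz : Fin m → ℝ) (ct cu : ℝ)
    (d : Fin n → ℝ) (a : Fin m → Fin n → ℝ)
    (A : AdmissibleAgg m n S d a)
    (hmin : ∃ p : CorePoint m n, CoreFeasible d a p ∧
      ∀ p' : CorePoint m n, CoreFeasible d a p' →
        CoreObj cx cz ct cu p ≤ CoreObj cx cz ct cu p') :
    ∃ p : CorePoint m n, CoreFeasible d a p ∧
      (∀ p' : CorePoint m n, CoreFeasible d a p' →
        CoreObj cx cz ct cu p ≤ CoreObj cx cz ct cu p') ∧
      -- generation depends only on the state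
      (∀ g h h', A.Γ h = A.Γ h' → p.x g h = p.x g h') ∧
      -- net charge depends only on the state
      (∀ h h', A.Γ h = A.Γ h' → p.r h = p.r h') ∧
      -- the storage level at the final hour of a block depends only on the
      -- block's state
      (∀ h h', A.idx h = A.q (A.Γ h) → A.idx h' = A.q (A.Γ h') →
        A.Γ h = A.Γ h' → p.s h = p.s h') := by
  obtain ⟨p, hp, hopt⟩ := hmin
  refine ⟨liftPoint A (A.average p), A.coreFeasible_liftPoint (A.aggFeasible_average hp),
    fun p' hp' => ?_, fun g h h' hΓ => ?_, fun h h' hΓ => ?_, fun h h' he he' hΓ => ?_⟩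
  · rw [A.coreObj_liftPoint, A.aggObj_average]
    exact hopt p' hp'
  · simp only [liftPoint, hΓ]
  · simp only [liftPoint, hΓ]
  · simp only [liftPoint, he, he', hΓ]
end
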